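/- Let C = {(u, s) ∈ ℝ³ × ℝ : ‖u‖ ≤ s}. If (u*, s*) minimizes a linear functional (u,s) ↦ ⟨a, u⟩ + βs over C ∩ P for a polyhedron P, and β > 0 with the minimizer unique, then at optimality either ‖u*‖ = s* or the constraint s ≥ 0 from P is active with s* = 0. -/
import Mathlib

open scoped RealInnerProductSpace

/-- Exactness of the lossless relaxation: if `(u*, s*)` is the unique minimizer of the
linear functional `(u,s) ↦ ⟨a,u⟩ + β s`, with `β > 0`, over `C ∩ P`, where
`C = {(u,s) : ‖u‖ ≤ s}` and `P` is a polyhedron (convex, containing the constraint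
`s ≥ 0` in the sense of being downward closed in `s` down to `0`), then either the cone
constraint is active, `‖u*‖ = s*`, or `s* = 0`. -/
theorem stmt_15 (a : EuclideanSpace ℝ (Fin 3)) (β : ℝ) (hβ : 0 < β)
    (P : Set (EuclideanSpace ℝ (Fin 3) × ℝ)) (hPconv : Convex ℝ P)
    (hPdown : ∀ p ∈ P, ∀ s' : ℝ, 0 ≤ s' → s' ≤ p.2 → (p.1, s') ∈ P)
    (ustar : EuclideanSpace ℝ (Fin 3)) (sstar : ℝ)
    (hfeas : (ustar, sstar) ∈ {p : EuclideanSpace ℝ (Fin 3) × ℝ | ‖p.1‖ ≤ p.2} ∩ P)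
    (hmin : ∀ p ∈ {p : EuclideanSpace ℝ (Fin 3) × ℝ | ‖p.1‖ ≤ p.2} ∩ P,
      ⟪a, ustar⟫ + β * sstar ≤ ⟪a, p.1⟫ + β * p.2)
    (huniq : ∀ p ∈ {p : EuclideanSpace ℝ (Fin 3) × ℝ | ‖p.1‖ ≤ p.2} ∩ P,
      ⟪a, p.1⟫ + β * p.2 = ⟪a, ustar⟫ + β * sstar → p = (ustar, sstar)) :
    ‖ustar‖ = sstar ∨ sstar = 0 := by
  obtain ⟨hcone, hP⟩ := hfeas
  have hc : ‖ustar‖ ≤ sstar := hcone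
  rcases eq_or_lt_of_le hc with h | h
  · exact Or.inl h
  · exfalso
    have hmem : (ustar, ‖ustar‖) ∈ P := hPdown _ hP ‖ustar‖ (norm_nonneg _) h.le
    have := hmin (ustar, ‖ustar‖) ⟨by simp, hmem⟩
    simp only at this
    nlinarith
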